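/- Let H be a complex Hilbert space with dim H ≥ 4 and let A = αP + βI with α, β real, α ≠ 0, and P a nontrivial orthogonal projection. The following are equivalent: (1) rank P > 1 and corank P > 1; (2) there exists an operator B ∈ A^c whose spectrum has exactly two points and an operator C ∈ B_s(H) such that B^c ≠ A^c and A^{cc} ⊊ C^{cc} ⊊ (A − B)^{cc}. -/

import Mathlib

set_option maxHeartbeats 1600000

noncomputable section

variable {H : Type*} [NormedAddCommGroup H] [InnerProductSpace ℂ H] [CompleteSpace H]

/-- `M^c`: the set of self-adjoint operators commuting with every member of `M`. -/
def CSet (M : Set (selfAdjoint (H →L[ℂ] H))) : Set (selfAdjoint (H →L[ℂ] H)) :=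
  {X | ∀ T ∈ M, (X : H →L[ℂ] H) * (T : H →L[ℂ] H) = (T : H →L[ℂ] H) * (X : H →L[ℂ] H)}

/-- `M^{cc} = (M^c)^c`. -/
def CCSet (M : Set (selfAdjoint (H →L[ℂ] H))) : Set (selfAdjoint (H →L[ℂ] H)) :=
  CSet (CSet M)

local notation "𝕆" => H →L[ℂ] H

def rOne (x y : H) : 𝕆 := (innerSL ℂ x).smulRight y

@[simp] lemma rOne_apply (x y z : H) : rOne x y z = (inner ℂ x z : ℂ) • y := rfl

lemma sym_sa (x y : H) : IsSelfAdjoint (rOne x y + rOne y x) := by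
  rw [ContinuousLinearMap.isSelfAdjoint_iff_isSymmetric]
  intro a b
  simp only [ContinuousLinearMap.coe_coe, ContinuousLinearMap.add_apply, rOne_apply,
    inner_add_left, inner_add_right, inner_smul_left, inner_smul_right, inner_conj_symm]
  ring

lemma rOne_self_sa (x : H) : IsSelfAdjoint (rOne x x) := by
  rw [ContinuousLinearMap.isSelfAdjoint_iff_isSymmetric]
  intro a b
  simp only [ContinuousLinearMap.coe_coe, rOne_apply,
    inner_smul_left, inner_smul_right, inner_conj_symm]
  ring

lemma rOne_comm (T : 𝕆) (hT : IsSelfAdjoint T) (v : H) (lam : ℝ)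
    (hv : T v = (lam : ℂ) • v) : rOne v v * T = T * rOne v v := by
  ext x
  simp only [ContinuousLinearMap.mul_apply, rOne_apply, map_smul]
  rw [← hT.isSymmetric.apply_clm v x, hv, inner_smul_left, Complex.conj_ofReal,
    smul_smul]
  ring_nf

lemma mem_CSet_singleton {T X : selfAdjoint 𝕆} :
    X ∈ CSet {T} ↔ (X : 𝕆) * (T : 𝕆) = (T : 𝕆) * (X : 𝕆) := by
  simp [CSet]

lemma CSet_anti {M N : Set (selfAdjoint 𝕆)} (h : M ⊆ N) : CSet N ⊆ CSet M :=
  fun _ hX T hT => hX T (h hT)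

lemma CCSet_mono_of_CSet {S T : selfAdjoint 𝕆} (h : CSet {T} ⊆ CSet {S}) :
    CCSet {S} ⊆ CCSet {T} := fun _ hX Z hZ => hX Z (h hZ)

lemma ccset_eigen (T X : selfAdjoint 𝕆) (hX : X ∈ CCSet {T})
    (lam : ℝ) (v : H) (hv : (T : 𝕆) v = (lam : ℂ) • v) :
    ∃ c : ℂ, (X : 𝕆) v = c • v := by
  by_cases h0 : v = 0
  · exact ⟨0, by simp [h0]⟩
  have hR : (⟨rOne v v, rOne_self_sa v⟩ : selfAdjoint 𝕆) ∈ CSet {T} := by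
    intro T' hT'
    rcases Set.mem_singleton_iff.1 hT' with rfl
    exact rOne_comm _ T'.2 v lam hv
  have h2 := congrArg (fun f : 𝕆 => f v) (hX _ hR)
  simp only [ContinuousLinearMap.mul_apply, rOne_apply, map_smul] at h2
  -- h2 : ⟪v,v⟫ • X v = ⟪v, X v⟫ • v
  have hvv : (inner ℂ v v : ℂ) ≠ 0 := inner_self_ne_zero.2 h0
  refine ⟨(inner ℂ v v : ℂ)⁻¹ * (inner ℂ v ((X : 𝕆) v) : ℂ), ?_⟩
  rw [mul_smul, ← h2, inv_smul_smul₀ hvv]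

lemma scalar_on (X F : 𝕆)
    (h : ∀ v : H, F v = v → ∃ c : ℂ, X v = c • v) :
    ∃ c : ℂ, ∀ v : H, F v = v → X v = c • v := by
  by_cases h0 : ∀ v : H, F v = v → v = 0
  · exact ⟨0, fun v hv => by rw [h0 v hv]; simp⟩
  push_neg at h0
  obtain ⟨v₀, hv₀, hv₀0⟩ := h0
  obtain ⟨c, hc⟩ := h v₀ hv₀
  refine ⟨c, fun w hw => ?_⟩
  by_cases hw0 : w = 0
  · simp [hw0]
  obtain ⟨d, hd⟩ := h w hw
  obtain ⟨e, he⟩ := h (v₀ + w) (by rw [map_add, hv₀, hw])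
  rw [map_add, hc, hd, smul_add] at he
  -- he : c • v₀ + d • w = e • v₀ + e • w
  by_cases hdep : ∃ μ : ℂ, w = μ • v₀
  · obtain ⟨μ, rfl⟩ := hdep
    rw [map_smul, hc, smul_comm]
  · have hed : e = d := by
      by_contra hne
      apply hdep
      have : (c - e) • v₀ = (e - d) • w := by
        rw [sub_smul, sub_smul]
        rw [sub_eq_sub_iff_add_eq_add]
        linear_combination (norm := module) he
      exact ⟨(e - d)⁻¹ * (c - e), by rw [mul_smul, this, inv_smul_smul₀ (sub_ne_zero.2 hne)]⟩
    have hce : c = e := by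
      rw [hed] at he
      have : (c - d) • v₀ = 0 := by
        rw [sub_smul, sub_eq_zero]
        linear_combination (norm := module) he
      rcases smul_eq_zero.1 this with h' | h'
      · rw [sub_eq_zero.1 h', hed]
      · exact absurd h' hv₀0
    rw [hd, hce, hed]
lemma L1 (T X : selfAdjoint 𝕆) (hX : X ∈ CCSet {T})
    (F₁ F₂ F₃ F₄ : 𝕆) (l₁ l₂ l₃ l₄ : ℝ)
    (hi₁ : F₁ * F₁ = F₁) (hi₂ : F₂ * F₂ = F₂) (hi₃ : F₃ * F₃ = F₃) (hi₄ : F₄ * F₄ = F₄)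
    (o₁₂ : F₁ * F₂ = 0) (o₁₃ : F₁ * F₃ = 0) (o₁₄ : F₁ * F₄ = 0)
    (o₂₁ : F₂ * F₁ = 0) (o₂₃ : F₂ * F₃ = 0) (o₂₄ : F₂ * F₄ = 0)
    (o₃₁ : F₃ * F₁ = 0) (o₃₂ : F₃ * F₂ = 0) (o₃₄ : F₃ * F₄ = 0)
    (o₄₁ : F₄ * F₁ = 0) (o₄₂ : F₄ * F₂ = 0) (o₄₃ : F₄ * F₃ = 0)
    (hsum : F₁ + F₂ + F₃ + F₄ = 1)
    (hT : (T : 𝕆) = (l₁ : ℂ) • F₁ + (l₂ : ℂ) • F₂ + (l₃ : ℂ) • F₃ + (l₄ : ℂ) • F₄) :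
    ∃ c₁ c₂ c₃ c₄ : ℂ, (X : 𝕆) = c₁ • F₁ + c₂ • F₂ + c₃ • F₃ + c₄ • F₄ := by
  have key : ∀ (F : 𝕆) (l : ℝ), (∀ v : H, F v = v → (T : 𝕆) v = (l : ℂ) • v) →
      ∃ c : ℂ, ∀ v : H, F v = v → (X : 𝕆) v = c • v := by
    intro F l hF
    exact scalar_on _ F (fun v hv => ccset_eigen T X hX l v (hF v hv))
  have e₁ : ∀ v : H, F₁ v = v → (T : 𝕆) v = (l₁ : ℂ) • v := by
    intro v hv
    have h2 : F₂ v = 0 := by rw [← hv, ← ContinuousLinearMap.mul_apply, o₂₁, ContinuousLinearMap.zero_apply]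
    have h3 : F₃ v = 0 := by rw [← hv, ← ContinuousLinearMap.mul_apply, o₃₁, ContinuousLinearMap.zero_apply]
    have h4 : F₄ v = 0 := by rw [← hv, ← ContinuousLinearMap.mul_apply, o₄₁, ContinuousLinearMap.zero_apply]
    simp [hT, hv, h2, h3, h4]
  have e₂ : ∀ v : H, F₂ v = v → (T : 𝕆) v = (l₂ : ℂ) • v := by
    intro v hv
    have h1 : F₁ v = 0 := by rw [← hv, ← ContinuousLinearMap.mul_apply, o₁₂, ContinuousLinearMap.zero_apply]
    have h3 : F₃ v = 0 := by rw [← hv, ← ContinuousLinearMap.mul_apply, o₃₂, ContinuousLinearMap.zero_apply]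
    have h4 : F₄ v = 0 := by rw [← hv, ← ContinuousLinearMap.mul_apply, o₄₂, ContinuousLinearMap.zero_apply]
    simp [hT, hv, h1, h3, h4]
  have e₃ : ∀ v : H, F₃ v = v → (T : 𝕆) v = (l₃ : ℂ) • v := by
    intro v hv
    have h1 : F₁ v = 0 := by rw [← hv, ← ContinuousLinearMap.mul_apply, o₁₃, ContinuousLinearMap.zero_apply]
    have h2 : F₂ v = 0 := by rw [← hv, ← ContinuousLinearMap.mul_apply, o₂₃, ContinuousLinearMap.zero_apply]
    have h4 : F₄ v = 0 := by rw [← hv, ← ContinuousLinearMap.mul_apply, o₄₃, ContinuousLinearMap.zero_apply]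
    simp [hT, hv, h1, h2, h4]
  have e₄ : ∀ v : H, F₄ v = v → (T : 𝕆) v = (l₄ : ℂ) • v := by
    intro v hv
    have h1 : F₁ v = 0 := by rw [← hv, ← ContinuousLinearMap.mul_apply, o₁₄, ContinuousLinearMap.zero_apply]
    have h2 : F₂ v = 0 := by rw [← hv, ← ContinuousLinearMap.mul_apply, o₂₄, ContinuousLinearMap.zero_apply]
    have h3 : F₃ v = 0 := by rw [← hv, ← ContinuousLinearMap.mul_apply, o₃₄, ContinuousLinearMap.zero_apply]
    simp [hT, hv, h1, h2, h3]
  obtain ⟨c₁, hc₁⟩ := key F₁ l₁ e₁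
  obtain ⟨c₂, hc₂⟩ := key F₂ l₂ e₂
  obtain ⟨c₃, hc₃⟩ := key F₃ l₃ e₃
  obtain ⟨c₄, hc₄⟩ := key F₄ l₄ e₄
  refine ⟨c₁, c₂, c₃, c₄, ?_⟩
  ext x
  have hx : x = F₁ x + F₂ x + F₃ x + F₄ x := by
    have := congrArg (fun f : 𝕆 => f x) hsum
    simpa using this.symm
  have f₁ : F₁ (F₁ x) = F₁ x := by rw [← ContinuousLinearMap.mul_apply, hi₁]
  have f₂ : F₂ (F₂ x) = F₂ x := by rw [← ContinuousLinearMap.mul_apply, hi₂]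
  have f₃ : F₃ (F₃ x) = F₃ x := by rw [← ContinuousLinearMap.mul_apply, hi₃]
  have f₄ : F₄ (F₄ x) = F₄ x := by rw [← ContinuousLinearMap.mul_apply, hi₄]
  calc (X : 𝕆) x = (X : 𝕆) (F₁ x) + (X : 𝕆) (F₂ x) + (X : 𝕆) (F₃ x) + (X : 𝕆) (F₄ x) := by
        conv_lhs => rw [hx]
        simp [map_add]
    _ = c₁ • F₁ x + c₂ • F₂ x + c₃ • F₃ x + c₄ • F₄ x := by
        rw [hc₁ _ f₁, hc₂ _ f₂, hc₃ _ f₃, hc₄ _ f₄]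
    _ = (c₁ • F₁ + c₂ • F₂ + c₃ • F₃ + c₄ • F₄) x := by simp
open Polynomial in
lemma quad_zero (B : 𝕆) (hB : IsSelfAdjoint B) (a b : ℂ)
    (hsp : spectrum ℂ B = {a, b}) :
    a = (a.re : ℂ) ∧ b = (b.re : ℂ) ∧
      ((B : 𝕆) - a • 1) * ((B : 𝕆) - b • 1) = 0 := by
  have ha : a = (a.re : ℂ) := hB.mem_spectrum_eq_re (by rw [hsp]; exact Set.mem_insert _ _)
  have hb : b = (b.re : ℂ) := hB.mem_spectrum_eq_re
    (by rw [hsp]; exact Set.mem_insert_of_mem _ rfl)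
  refine ⟨ha, hb, ?_⟩
  set M : 𝕆 := (B - a • 1) * (B - b • 1) with hM
  have haev : M = Polynomial.aeval B ((X - C a) * (X - C b)) := by
    simp [hM, Algebra.algebraMap_eq_smul_one]
  have hspM : spectrum ℂ M = {0} := by
    rw [haev, spectrum.map_polynomial_aeval_of_nonempty B _ (by rw [hsp]; exact ⟨a, Set.mem_insert _ _⟩)]
    rw [hsp]
    ext z
    simp only [Set.mem_image, Set.mem_insert_iff, Set.mem_singleton_iff]
    constructor
    · rintro ⟨k, hk | hk, rfl⟩ <;> subst hk <;> simp
    · rintro rfl; exact ⟨a, Or.inl rfl, by simp⟩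
  have hexp : M = B * B - (a + b) • B + (a * b) • 1 := by
    simp only [hM, mul_sub, sub_mul, smul_sub, smul_mul_assoc, mul_smul_comm, one_mul, mul_one,
      smul_smul, add_smul]
    rw [mul_comm b a]
    abel
  have hab1 : (starRingEnd ℂ) (a + b) = a + b := by
    rw [ha, hb, ← Complex.ofReal_add, Complex.conj_ofReal]
  have hab2 : (starRingEnd ℂ) (a * b) = a * b := by
    rw [ha, hb, ← Complex.ofReal_mul, Complex.conj_ofReal]
  have hMsa : IsSelfAdjoint M := by
    rw [hexp]
    rw [IsSelfAdjoint] at hB ⊢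
    simp only [star_add, star_sub, star_mul, star_smul, star_one, hB, RCLike.star_def,
      ← map_mul, ← map_add]
    rw [mul_comm b a, hab1, hab2]
  have hnorm : ‖M‖₊ = 0 := by
    have := hMsa.spectralRadius_eq_nnnorm
    rw [spectralRadius, hspM] at this
    simpa using this.symm
  simpa using hnorm
lemma comm_P_of_comm_A (P : 𝕆) (α β : ℝ) (hα : α ≠ 0) (A : selfAdjoint 𝕆)
    (hA : (A : 𝕆) = (α : ℂ) • P + (β : ℂ) • 1) (Z : 𝕆)
    (hZ : Z * (A : 𝕆) = (A : 𝕆) * Z) : Z * P = P * Z := by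
  rw [hA] at hZ
  simp only [mul_add, add_mul, mul_smul_comm, smul_mul_assoc, mul_one, one_mul] at hZ
  have h2 := add_right_cancel hZ
  have hc : (α : ℂ) ≠ 0 := Complex.ofReal_ne_zero.mpr hα
  exact smul_right_injective 𝕆 hc h2

lemma comm_combo (Z S1 S2 S3 : 𝕆) (h1 : Z * S1 = S1 * Z) (h2 : Z * S2 = S2 * Z)
    (h3 : Z * S3 = S3 * Z) (c1 c2 c3 : ℂ) :
    Z * (c1 • S1 + c2 • S2 + c3 • S3) = (c1 • S1 + c2 • S2 + c3 • S3) * Z := by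
  simp only [mul_add, add_mul, mul_smul_comm, smul_mul_assoc, h1, h2, h3]

lemma rank_one_comm (Q : 𝕆) (hQidem : IsIdempotentElem Q) (hQ0 : Q ≠ 0)
    (hrk : Module.rank ℂ (LinearMap.range (Q : H →ₗ[ℂ] H)) ≤ 1)
    (E : 𝕆) (hE : IsIdempotentElem E) (hcomm : E * Q = Q * E) :
    E * Q = Q ∨ E * Q = 0 := by
  obtain ⟨v₀, hv₀⟩ := rank_le_one_iff.1 hrk
  have hmul : ∀ x : H, ∃ c : ℂ, Q x = c • (v₀ : H) := by
    intro x
    have hmem : Q x ∈ LinearMap.range (Q : H →ₗ[ℂ] H) := ⟨x, rfl⟩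
    obtain ⟨r, hr⟩ := hv₀ ⟨Q x, hmem⟩
    exact ⟨r, by simpa using (congrArg Subtype.val hr).symm⟩
  by_cases h0 : (v₀ : H) = 0
  · exfalso; apply hQ0; ext x
    obtain ⟨c, hc⟩ := hmul x
    simp [hc, h0]
  set u : H := (v₀ : H) with hu
  have hQu : Q u = u := by
    obtain ⟨y, hy⟩ := v₀.2
    have hy' : Q y = u := hy
    rw [← hy', ← ContinuousLinearMap.mul_apply, hQidem]
  have hEu : ∃ t : ℂ, E u = t • u := by
    have h1 : Q (E u) = E u := by
      rw [← ContinuousLinearMap.mul_apply, ← hcomm, ContinuousLinearMap.mul_apply, hQu]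
    obtain ⟨c, hc⟩ := hmul (E u)
    exact ⟨c, by rw [← h1, hc]⟩
  obtain ⟨t, ht⟩ := hEu
  have ht2 : t * t = t := by
    have h1 : E (E u) = E u := by
      rw [← ContinuousLinearMap.mul_apply, hE]
    rw [ht, map_smul, ht, smul_smul] at h1
    have := sub_eq_zero.2 h1
    rw [← sub_smul] at this
    rcases smul_eq_zero.1 this with h' | h'
    · exact sub_eq_zero.1 h'
    · exact absurd h' h0
  have ht01 : t = 0 ∨ t = 1 := by
    rcases mul_eq_zero.1 (by linear_combination ht2 : t * (t - 1) = 0) with h' | h'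
    · exact Or.inl h'
    · exact Or.inr (sub_eq_zero.1 h')
  rcases ht01 with ht0 | ht1
  · right; ext x
    obtain ⟨c, hc⟩ := hmul x
    simp only [ContinuousLinearMap.mul_apply, hc, map_smul, ht, ht0,
      ContinuousLinearMap.zero_apply, zero_smul, smul_zero]
  · left; ext x
    obtain ⟨c, hc⟩ := hmul x
    simp only [ContinuousLinearMap.mul_apply, hc, map_smul, ht, ht1, one_smul]
lemma mem_CCSet_of_combo (M : Set (selfAdjoint 𝕆)) (Y : selfAdjoint 𝕆) (S1 S2 S3 : 𝕆)
    (h1 : ∀ Z ∈ CSet M, (Z : 𝕆) * S1 = S1 * (Z : 𝕆))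
    (h2 : ∀ Z ∈ CSet M, (Z : 𝕆) * S2 = S2 * (Z : 𝕆))
    (h3 : ∀ Z ∈ CSet M, (Z : 𝕆) * S3 = S3 * (Z : 𝕆))
    (c1 c2 c3 : ℂ) (hY : (Y : 𝕆) = c1 • S1 + c2 • S2 + c3 • S3) : Y ∈ CCSet M := by
  intro Z hZ
  rw [hY]
  exact (comm_combo (Z : 𝕆) S1 S2 S3 (h1 Z hZ) (h2 Z hZ) (h3 Z hZ) c1 c2 c3).symm

lemma reverse_dir (P : 𝕆) (hPsa : IsSelfAdjoint P) (hPidem : IsIdempotentElem P)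
    (hP0 : P ≠ 0) (hP1 : P ≠ 1) (α β : ℝ) (hα : α ≠ 0)
    (A : selfAdjoint 𝕆) (hA : (A : 𝕆) = (α : ℂ) • P + (β : ℂ) • 1)
    (hrk : Module.rank ℂ (LinearMap.range (P : H →ₗ[ℂ] H)) ≤ 1 ∨
           Module.rank ℂ (LinearMap.range ((1 - P : 𝕆) : H →ₗ[ℂ] H)) ≤ 1)
    (B : selfAdjoint 𝕆) (hBc : B ∈ CSet {A})
    (a b : ℂ) (hab : a ≠ b) (hsp : spectrum ℂ (B : 𝕆) = {a, b})
    (C : selfAdjoint 𝕆)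
    (h1 : CCSet {A} ⊂ CCSet {C}) (h2 : CCSet {C} ⊂ CCSet {A - B}) : False := by
  obtain ⟨ha, hb, hquad⟩ := quad_zero (B : 𝕆) B.2 a b hsp
  have hBA : (B : 𝕆) * (A : 𝕆) = (A : 𝕆) * (B : 𝕆) := hBc A (Set.mem_singleton A)
  have hBP : (B : 𝕆) * P = P * (B : 𝕆) := comm_P_of_comm_A P α β hα A hA _ hBA
  have habne : a - b ≠ 0 := sub_ne_zero.2 hab
  set E : 𝕆 := (a - b)⁻¹ • ((B : 𝕆) - b • 1) with hEdef
  have hBE : (B : 𝕆) = (a - b) • E + b • 1 := by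
    rw [hEdef, smul_smul, mul_inv_cancel₀ habne, one_smul, sub_add_cancel]
  have hq2 : ((B : 𝕆) - b • 1) * ((B : 𝕆) - b • 1) = (a - b) • ((B : 𝕆) - b • 1) := by
    have hsplit : (B : 𝕆) - b • 1 = ((B : 𝕆) - a • 1) + (a - b) • 1 := by
      rw [sub_smul]; abel
    have h0 : ((B : 𝕆) - b • 1) * ((B : 𝕆) - b • 1)
        = (((B : 𝕆) - a • 1) + (a - b) • 1) * ((B : 𝕆) - b • 1) := by rw [← hsplit]
    rw [h0, add_mul, hquad, zero_add, smul_mul_assoc, one_mul]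
  have hEE : E * E = E := by
    rw [hEdef, smul_mul_assoc, mul_smul_comm, hq2, smul_smul, smul_smul]
    congr 1
    field_simp
  have hEP : E * P = P * E := by
    rw [hEdef]
    simp only [smul_mul_assoc, mul_smul_comm, sub_mul, mul_sub, one_mul, mul_one, hBP]
  clear_value E
  have hPP : P * P = P := hPidem
  -- the rank-one condition gives P*E ∈ span {P, E, 1}
  obtain ⟨s, t, w, hK⟩ : ∃ s t w : ℂ, P * E = s • P + t • E + w • 1 := by
    rcases hrk with hr | hr
    · rcases rank_one_comm P hPidem hP0 hr E hEE hEP with h | h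
      · exact ⟨1, 0, 0, by rw [← hEP, h]; simp⟩
      · exact ⟨0, 0, 0, by rw [← hEP, h]; simp⟩
    · have hQ0 : (1 : 𝕆) - P ≠ 0 := sub_ne_zero.2 (Ne.symm hP1)
      have hidem' : IsIdempotentElem ((1 : 𝕆) - P) := hPidem.one_sub
      have hcomm' : E * ((1 : 𝕆) - P) = ((1 : 𝕆) - P) * E := by
        simp only [mul_sub, sub_mul, mul_one, one_mul, hEP]
      rcases rank_one_comm _ hidem' hQ0 hr E hEE hcomm' with h | h
      · refine ⟨1, 1, -1, ?_⟩
        rw [mul_sub, mul_one] at h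
        rw [sub_eq_iff_eq_add] at h
        have h2 : E * P = E - 1 + P := by
          conv_rhs => rw [h]
          abel
        rw [← hEP, h2]; module
      · refine ⟨0, 1, 0, ?_⟩
        rw [mul_sub, mul_one, sub_eq_zero] at h
        rw [← hEP, ← h]; module
  -- multiplication table
  have hKP : (P * E) * P = P * E := by rw [mul_assoc, hEP, ← mul_assoc, hPP]
  have hPK : P * (P * E) = P * E := by rw [← mul_assoc, hPP]
  have hKE : (P * E) * E = P * E := by rw [mul_assoc, hEE]
  have hEK : E * (P * E) = P * E := by rw [← mul_assoc, hEP, mul_assoc, hEE]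
  have hKK : (P * E) * (P * E) = P * E := by rw [mul_assoc, hEK, hPK]
  have hEP' : E * P = P * E := hEP
  -- projections
  have hBD : ((A - B : selfAdjoint 𝕆) : 𝕆) = (A : 𝕆) - (B : 𝕆) := rfl
  have hT : ((A - B : selfAdjoint 𝕆) : 𝕆) =
      ((α + β - a.re : ℝ) : ℂ) • (P * E) + ((α + β - b.re : ℝ) : ℂ) • (P - P * E)
      + ((β - a.re : ℝ) : ℂ) • (E - P * E) + ((β - b.re : ℝ) : ℂ) • (1 - P - E + P * E) := by
    rw [hBD, hA, hBE]
    push_cast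
    rw [← ha, ← hb]
    module
  obtain ⟨X, hXC, hXA⟩ := Set.exists_of_ssubset h1
  obtain ⟨Y, hYD, hYC⟩ := Set.exists_of_ssubset h2
  have hXD : X ∈ CCSet {A - B} := h2.1 hXC
  have hL1 : ∀ W : selfAdjoint 𝕆, W ∈ CCSet {A - B} → ∃ p q r : ℂ,
      (W : 𝕆) = p • P + q • E + r • 1 := by
    intro W hW
    obtain ⟨c₁, c₂, c₃, c₄, hc⟩ := L1 (A - B) W hW (P * E) (P - P * E) (E - P * E)
      (1 - P - E + P * E) (α + β - a.re) (α + β - b.re) (β - a.re) (β - b.re)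
      hKK
      (by simp only [sub_mul, mul_sub, hPP, hKP, hPK, hKE, hKK]; abel)
      (by simp only [sub_mul, mul_sub, hEE, hEP', hEK, hKE, hKK]; abel)
      (by simp only [add_mul, mul_add, sub_mul, mul_sub, one_mul, mul_one,
            hPP, hEE, hEP', hEK, hKE, hKP, hPK, hKK]; abel)
      (by simp only [mul_sub, hKP, hKK]; abel)
      (by simp only [mul_sub, hKE, hKK]; abel)
      (by simp only [mul_add, mul_sub, mul_one, hKP, hKE, hKK]; abel)
      (by simp only [sub_mul, hPK, hKK]; abel)
      (by simp only [sub_mul, mul_sub, hPK, hKE, hKK]; abel)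
      (by simp only [mul_sub, mul_add, mul_one, sub_mul, hPP, hPK, hKP, hKE, hKK]; abel)
      (by simp only [sub_mul, hEK, hKK, hEP']; abel)
      (by simp only [sub_mul, mul_sub, hEP', hEK, hKP, hKK]; abel)
      (by simp only [mul_sub, mul_add, mul_one, sub_mul, hEP', hEE, hEK, hKP, hKE, hKK]; abel)
      (by simp only [sub_mul, add_mul, one_mul, hPK, hEK, hKK]; abel)
      (by simp only [sub_mul, add_mul, mul_sub, one_mul, hPP, hPK, hEP', hEK, hKP, hKK]; abel)
      (by simp only [sub_mul, add_mul, mul_sub, one_mul, hEE, hPK, hEK, hKE, hKK]; abel)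
      (by abel)
      hT
    exact ⟨c₂ + c₁ * s - c₄ - c₄ * s + (c₁ - c₂ - c₃ + c₄) * s - c₁ * s + c₄ * s,
      c₃ + (c₁ - c₂ - c₃ + c₄) * t - c₄, c₄ + (c₁ - c₂ - c₃ + c₄) * w, by rw [hc, hK]; module⟩
  obtain ⟨p, q, r, hXform⟩ := hL1 X hXD
  obtain ⟨p', q', r', hYform⟩ := hL1 Y hYD
  have hPA : ∀ Z ∈ CSet {A}, (Z : 𝕆) * P = P * (Z : 𝕆) := fun Z hZ =>
    comm_P_of_comm_A P α β hα A hA _ (hZ A (Set.mem_singleton A))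
  have hq0 : q ≠ 0 := by
    intro hq
    apply hXA
    refine mem_CCSet_of_combo _ X P 1 0 hPA (fun Z _ => by rw [mul_one, one_mul])
      (fun Z _ => by rw [mul_zero, zero_mul]) p r 0 ?_
    rw [hXform, hq]
    simp
  apply hYC
  have hXCc : ∀ Z ∈ CSet {C}, (Z : 𝕆) * (X : 𝕆) = (X : 𝕆) * (Z : 𝕆) :=
    fun Z hZ => (hXC Z hZ).symm
  have hPCc : ∀ Z ∈ CSet {C}, (Z : 𝕆) * P = P * (Z : 𝕆) := by
    have hPA' : (⟨P, hPsa⟩ : selfAdjoint 𝕆) ∈ CCSet {A} := fun Z hZ => (hPA Z hZ).symm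
    have hmem := h1.1 hPA'
    exact fun Z hZ => (hmem Z hZ).symm
  refine mem_CCSet_of_combo _ Y P 1 (X : 𝕆) hPCc (fun Z _ => by rw [mul_one, one_mul]) hXCc
    (q⁻¹ * (q * p' - q' * p)) (q⁻¹ * (q * r' - q' * r)) (q⁻¹ * q') ?_
  have hYq : q • (Y : 𝕆) = (q * p' - q' * p) • P + (q * r' - q' * r) • 1 + q' • (X : 𝕆) := by
    rw [hYform, hXform]; module
  rw [mul_smul, mul_smul, mul_smul, ← smul_add, ← smul_add, ← hYq, inv_smul_smul₀ hq0]
lemma rOne_mul_rOne (x y x' y' : H) :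
    rOne x y * rOne x' y' = (inner ℂ x y' : ℂ) • rOne x' y := by
  ext z
  simp only [ContinuousLinearMap.mul_apply, rOne_apply, ContinuousLinearMap.smul_apply,
    inner_smul_right, smul_smul]
  ring_nf

lemma mul_rOne (T : 𝕆) (x y : H) : T * rOne x y = rOne x (T y) := by
  ext z
  simp [ContinuousLinearMap.mul_apply]

lemma rOne_mul_sa (T : 𝕆) (hT : IsSelfAdjoint T) (x y : H) :
    rOne x y * T = rOne (T x) y := by
  ext z
  simp only [ContinuousLinearMap.mul_apply, rOne_apply]
  rw [← hT.isSymmetric.apply_clm x z]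

@[simp] lemma rOne_zero_left (y : H) : rOne (0 : H) y = 0 := by ext z; simp

@[simp] lemma rOne_zero_right (x : H) : rOne x (0 : H) = 0 := by ext z; simp

lemma extract_pair (Q : 𝕆) (hQidem : IsIdempotentElem Q)
    (hrk : 1 < Module.rank ℂ (LinearMap.range (Q : H →ₗ[ℂ] H))) :
    ∃ u w : H, Q u = u ∧ Q w = w ∧ (inner ℂ u u : ℂ) = 1 ∧ (inner ℂ w w : ℂ) = 1 ∧
      (inner ℂ u w : ℂ) = 0 := by
  have hfix : ∀ x : H, x ∈ LinearMap.range (Q : H →ₗ[ℂ] H) → Q x = x := by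
    rintro x ⟨y, rfl⟩
    show Q (Q y) = Q y
    rw [← ContinuousLinearMap.mul_apply, hQidem]
  have h1 := hrk.not_ge
  rw [rank_le_one_iff] at h1
  push_neg at h1
  -- get a nonzero element
  obtain ⟨u₁, hu₁⟩ : ∃ u₁ : H, u₁ ∈ LinearMap.range (Q : H →ₗ[ℂ] H) ∧ u₁ ≠ 0 := by
    by_contra hcon
    push_neg at hcon
    obtain ⟨v, hv⟩ := h1 0
    exact hv 0 (by
      have : (v : H) = 0 := hcon v v.2
      apply Subtype.ext
      simp [this])
  obtain ⟨w₁, hw₁⟩ := h1 ⟨u₁, hu₁.1⟩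
  -- w₁ is not a multiple of u₁
  have hw₁' : ∀ c : ℂ, (w₁ : H) ≠ c • u₁ := by
    intro c hc
    exact hw₁ c (Subtype.ext (by simp [hc]))
  set u : H := (‖u₁‖ : ℂ)⁻¹ • u₁ with hudef
  have hn₁ : (‖u₁‖ : ℂ) ≠ 0 := by
    simp only [ne_eq, Complex.ofReal_eq_zero, norm_eq_zero]
    exact hu₁.2
  have huu : (inner ℂ u u : ℂ) = 1 := by
    rw [hudef, inner_smul_left, inner_smul_right, inner_self_eq_norm_sq_to_K]
    rw [map_inv₀, Complex.conj_ofReal]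
    field_simp
    norm_cast
  have hQu : Q u = u := by
    rw [hudef, map_smul, hfix u₁ hu₁.1]
  set w₂ : H := (w₁ : H) - (inner ℂ u (w₁ : H) : ℂ) • u with hw₂def
  have hw₂0 : w₂ ≠ 0 := by
    intro hc
    apply hw₁' ((inner ℂ u (w₁ : H) : ℂ) * (‖u₁‖ : ℂ)⁻¹)
    rw [sub_eq_zero] at hc
    rw [mul_smul, ← hudef]
    exact hc
  have hQw₂ : Q w₂ = w₂ := by
    rw [hw₂def, map_sub, map_smul, hQu, hfix w₁ w₁.2]
  have huw₂ : (inner ℂ u w₂ : ℂ) = 0 := by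
    rw [hw₂def, inner_sub_right, inner_smul_right, huu, mul_one, sub_self]
  set w : H := (‖w₂‖ : ℂ)⁻¹ • w₂ with hwdef
  have hn₂ : (‖w₂‖ : ℂ) ≠ 0 := by
    simp only [ne_eq, Complex.ofReal_eq_zero, norm_eq_zero]
    exact hw₂0
  refine ⟨u, w, hQu, by rw [hwdef, map_smul, hQw₂], huu, ?_, ?_⟩
  · rw [hwdef, inner_smul_left, inner_smul_right, inner_self_eq_norm_sq_to_K]
    rw [map_inv₀, Complex.conj_ofReal]
    field_simp
    norm_cast
  · rw [hwdef, inner_smul_right, huw₂, mul_zero]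
lemma comm_A_of_comm_P (P : 𝕆) (α β : ℝ) (A : selfAdjoint 𝕆)
    (hA : (A : 𝕆) = (α : ℂ) • P + (β : ℂ) • 1) (Z : 𝕆) (h : Z * P = P * Z) :
    Z * (A : 𝕆) = (A : 𝕆) * Z := by
  rw [hA]
  simp only [mul_add, add_mul, mul_smul_comm, smul_mul_assoc, mul_one, one_mul, h]

lemma inv_formula1 (e : 𝕆) (he : e * e = e) (k kk c μ : ℂ) :
    (k • (1:𝕆) - c • e) * (kk • 1 + μ • e)
      = (k * kk) • 1 + (k * μ - c * kk - c * μ) • e := by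
  simp only [mul_add, add_mul, sub_mul, mul_sub, smul_mul_assoc, mul_smul_comm,
    one_mul, mul_one, he, smul_smul]
  module

lemma inv_formula2 (e : 𝕆) (he : e * e = e) (k kk c μ : ℂ) :
    (kk • (1:𝕆) + μ • e) * (k • 1 - c • e)
      = (kk * k) • 1 + (μ * k - kk * c - μ * c) • e := by
  simp only [mul_add, add_mul, sub_mul, mul_sub, smul_mul_assoc, mul_smul_comm,
    one_mul, mul_one, he, smul_smul]
  module

lemma forward_dir (P : 𝕆) (hPsa : IsSelfAdjoint P) (hPidem : IsIdempotentElem P)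
    (α β : ℝ) (hα : α ≠ 0)
    (A : selfAdjoint 𝕆) (hA : (A : 𝕆) = (α : ℂ) • P + (β : ℂ) • 1)
    (hrk1 : 1 < Module.rank ℂ (LinearMap.range (P : H →ₗ[ℂ] H)))
    (hrk2 : 1 < Module.rank ℂ (LinearMap.range ((1 - P : 𝕆) : H →ₗ[ℂ] H))) :
    ∃ B ∈ CSet {A},
      (∃ a b : ℂ, a ≠ b ∧ spectrum ℂ (B : 𝕆) = {a, b}) ∧
      ∃ C : selfAdjoint 𝕆,
        CSet {B} ≠ CSet {A} ∧ CCSet {A} ⊂ CCSet {C} ∧ CCSet {C} ⊂ CCSet {A - B} := by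
  obtain ⟨u, w, hPu, hPw, huu, hww, huw⟩ := extract_pair P hPidem hrk1
  obtain ⟨v, z, hv', hz', hvv, hzz, hvz⟩ := extract_pair (1 - P) hPidem.one_sub hrk2
  have hPv : P v = 0 := by
    have h := hv'
    simp only [ContinuousLinearMap.sub_apply, ContinuousLinearMap.one_apply] at h
    have h2 : v - P v = v - 0 := by rw [sub_zero]; exact h
    exact sub_right_inj.1 h2
  have hPz : P z = 0 := by
    have h := hz'
    simp only [ContinuousLinearMap.sub_apply, ContinuousLinearMap.one_apply] at h
    have h2 : z - P z = z - 0 := by rw [sub_zero]; exact h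
    exact sub_right_inj.1 h2
  have cross : ∀ x y : H, P x = x → P y = 0 → (inner ℂ x y : ℂ) = 0 := by
    intro x y hx hy
    rw [← hx, hPsa.isSymmetric.apply_clm x y, hy, inner_zero_right]
  have huv : (inner ℂ u v : ℂ) = 0 := cross u v hPu hPv
  have huz : (inner ℂ u z : ℂ) = 0 := cross u z hPu hPz
  have hwv : (inner ℂ w v : ℂ) = 0 := cross w v hPw hPv
  have hwz : (inner ℂ w z : ℂ) = 0 := cross w z hPw hPz
  have hvu : (inner ℂ v u : ℂ) = 0 := by rw [← inner_conj_symm, huv, map_zero]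
  have hzu : (inner ℂ z u : ℂ) = 0 := by rw [← inner_conj_symm, huz, map_zero]
  have hvw : (inner ℂ v w : ℂ) = 0 := by rw [← inner_conj_symm, hwv, map_zero]
  have hzv : (inner ℂ z v : ℂ) = 0 := by rw [← inner_conj_symm, hvz, map_zero]
  have hwu : (inner ℂ w u : ℂ) = 0 := by rw [← inner_conj_symm, huw, map_zero]
  have hu0 : u ≠ 0 := fun h => by rw [h, inner_zero_left] at huu; exact zero_ne_one huu
  have hw0 : w ≠ 0 := fun h => by rw [h, inner_zero_left] at hww; exact zero_ne_one hww
  have hv0 : v ≠ 0 := fun h => by rw [h, inner_zero_left] at hvv; exact zero_ne_one hvv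
  have hz0 : z ≠ 0 := fun h => by rw [h, inner_zero_left] at hzz; exact zero_ne_one hzz
  set Q₁ : 𝕆 := rOne u u with hQ₁def
  set Q₂ : 𝕆 := rOne v v with hQ₂def
  have hPP : P * P = P := hPidem
  have hPQ₁ : P * Q₁ = Q₁ := by rw [hQ₁def, mul_rOne, hPu]
  have hQ₁P : Q₁ * P = Q₁ := by rw [hQ₁def, rOne_mul_sa P hPsa, hPu]
  have hPQ₂ : P * Q₂ = 0 := by rw [hQ₂def, mul_rOne, hPv, rOne_zero_right]
  have hQ₂P : Q₂ * P = 0 := by rw [hQ₂def, rOne_mul_sa P hPsa, hPv, rOne_zero_left]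
  have hQ₁Q₁ : Q₁ * Q₁ = Q₁ := by rw [hQ₁def, rOne_mul_rOne, huu, one_smul]
  have hQ₂Q₂ : Q₂ * Q₂ = Q₂ := by rw [hQ₂def, rOne_mul_rOne, hvv, one_smul]
  have hQ₁Q₂ : Q₁ * Q₂ = 0 := by rw [hQ₁def, hQ₂def, rOne_mul_rOne, huv, zero_smul]
  have hQ₂Q₁ : Q₂ * Q₁ = 0 := by rw [hQ₁def, hQ₂def, rOne_mul_rOne, hvu, zero_smul]
  have hαC : (α : ℂ) ≠ 0 := Complex.ofReal_ne_zero.mpr hα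
  set c : ℂ := (α : ℂ) / 2 with hcdef
  have hc0 : c ≠ 0 := div_ne_zero hαC two_ne_zero
  have hsum_sa : IsSelfAdjoint (Q₁ + Q₂) := (rOne_self_sa u).add (rOne_self_sa v)
  have hcc : (starRingEnd ℂ) c = c := by
    rw [hcdef, map_div₀, Complex.conj_ofReal, map_ofNat]
  have hBsa : IsSelfAdjoint (c • (Q₁ + Q₂)) := by
    rw [IsSelfAdjoint, star_smul, RCLike.star_def, hcc, hsum_sa.star_eq]
  set Bop : 𝕆 := c • (Q₁ + Q₂) with hBopdef
  set Bsa : selfAdjoint 𝕆 := ⟨Bop, hBsa⟩ with hBsadef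
  have hBP : Bop * P = P * Bop := by
    rw [hBopdef]
    simp only [smul_mul_assoc, mul_smul_comm, add_mul, mul_add,
      hPQ₁, hQ₁P, hPQ₂, hQ₂P]
  have hBmem : Bsa ∈ CSet {A} := by
    intro T hT
    rcases Set.mem_singleton_iff.1 hT with rfl
    exact comm_A_of_comm_P P α β T hA Bop hBP
  -- spectrum of B
  have hE2 : (Q₁ + Q₂) * (Q₁ + Q₂) = Q₁ + Q₂ := by
    simp only [mul_add, add_mul, hQ₁Q₁, hQ₂Q₂, hQ₁Q₂, hQ₂Q₁, add_zero, zero_add]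
  have hBu : Bop u = c • u := by
    rw [hBopdef]
    simp only [hQ₁def, hQ₂def, ContinuousLinearMap.smul_apply, ContinuousLinearMap.add_apply,
      rOne_apply, huu, hvu, one_smul, zero_smul, add_zero]
  have hBz : Bop z = 0 := by
    rw [hBopdef]
    simp [hQ₁def, hQ₂def, huz, hvz]
  have hspec : spectrum ℂ Bop = {c, 0} := by
    ext k
    simp only [Set.mem_insert_iff, Set.mem_singleton_iff]
    constructor
    · intro hk
      by_contra hcon
      push_neg at hcon
      obtain ⟨hkc, hk0⟩ := hcon
      apply spectrum.notMem_iff.2 ?_ hk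
      rw [Algebra.algebraMap_eq_smul_one]
      obtain ⟨μ, hμ⟩ : ∃ m : ℂ, m = c * k⁻¹ * (k - c)⁻¹ := ⟨_, rfl⟩
      have hkc' : k - c ≠ 0 := sub_ne_zero.2 hkc
      have hcoef : k * μ - c * k⁻¹ - c * μ = 0 := by
        rw [hμ]; field_simp; ring
      have h1 : (k • (1:𝕆) - Bop) * (k⁻¹ • 1 + μ • (Q₁ + Q₂)) = 1 := by
        rw [hBopdef, inv_formula1 _ hE2, hcoef, zero_smul, add_zero,
          mul_inv_cancel₀ hk0, one_smul]
      have h2 : (k⁻¹ • 1 + μ • (Q₁ + Q₂)) * (k • (1:𝕆) - Bop) = 1 := by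
        have hcoef2 : μ * k - k⁻¹ * c - μ * c = 0 := by
          rw [hμ]; field_simp; ring
        rw [hBopdef, inv_formula2 _ hE2, hcoef2, zero_smul, add_zero,
          inv_mul_cancel₀ hk0, one_smul]
      exact isUnit_iff_exists.2 ⟨_, h1, h2⟩
    · intro hk
      rcases hk with rfl | rfl
      · rw [spectrum.mem_iff, Algebra.algebraMap_eq_smul_one]
        intro hunit
        have happ : ((c • (1:𝕆) - Bop)) u = 0 := by
          simp only [ContinuousLinearMap.sub_apply, ContinuousLinearMap.smul_apply,
            ContinuousLinearMap.one_apply, hBu, sub_self]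
        obtain ⟨V, hV⟩ := hunit.exists_left_inv
        have h1 : (V * (c • (1:𝕆) - Bop)) u = u := by rw [hV]; rfl
        rw [ContinuousLinearMap.mul_apply, happ, map_zero] at h1
        exact hu0 h1.symm
      · rw [spectrum.mem_iff, Algebra.algebraMap_eq_smul_one]
        intro hunit
        have happ : ((0 : ℂ) • (1:𝕆) - Bop) z = 0 := by
          simp only [ContinuousLinearMap.sub_apply, ContinuousLinearMap.smul_apply,
            ContinuousLinearMap.one_apply, ContinuousLinearMap.neg_apply,
            zero_smul, zero_sub, hBz, neg_zero]
        obtain ⟨V, hV⟩ := hunit.exists_left_inv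
        have h1 : (V * ((0:ℂ) • (1:𝕆) - Bop)) z = z := by rw [hV]; rfl
        rw [ContinuousLinearMap.mul_apply, happ, map_zero] at h1
        exact hz0 h1.symm
    -- the operator C = P + Q₁
  have hCsa : IsSelfAdjoint (P + Q₁) := hPsa.add (rOne_self_sa u)
  set Csa : selfAdjoint 𝕆 := ⟨P + Q₁, hCsa⟩ with hCsadef
  have hCkey : ∀ Z : 𝕆, Z * (P + Q₁) = (P + Q₁) * Z → Z * Q₁ = Q₁ * Z ∧ Z * P = P * Z := by
    intro Z h
    have hC2 : (P + Q₁) * (P + Q₁) = P + (3 : ℂ) • Q₁ := by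
      simp only [mul_add, add_mul, hPP, hPQ₁, hQ₁P, hQ₁Q₁]
      module
    have h2 : Z * ((P + Q₁) * (P + Q₁)) = ((P + Q₁) * (P + Q₁)) * Z := by
      rw [← mul_assoc, h, mul_assoc, h, ← mul_assoc]
    rw [hC2] at h2
    have e1 : Z * P + Z * Q₁ = P * Z + Q₁ * Z := by
      simpa only [mul_add, add_mul] using h
    have e2 : Z * P + (3 : ℂ) • (Z * Q₁) = P * Z + (3 : ℂ) • (Q₁ * Z) := by
      simpa only [mul_add, add_mul, mul_smul_comm, smul_mul_assoc] using h2
    have e3 : (2 : ℂ) • (Z * Q₁) = (2 : ℂ) • (Q₁ * Z) := by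
      linear_combination (norm := module) e2 - e1
    have hZQ : Z * Q₁ = Q₁ * Z := smul_right_injective 𝕆 (two_ne_zero) e3
    refine ⟨hZQ, ?_⟩
    have := e1
    rw [hZQ] at this
    exact add_right_cancel this
  have hsub1 : CSet {Csa} ⊆ CSet {A} := by
    intro Z hZ T hT
    rcases Set.mem_singleton_iff.1 hT with rfl
    exact comm_A_of_comm_P P α β T hA _ (hCkey _ (hZ Csa (Set.mem_singleton Csa))).2
  have hccsub1 : CCSet {A} ⊆ CCSet {Csa} := fun X hX Z hZ => hX Z (hsub1 hZ)
  -- strictness 1 : Q₁ ∈ CCSet {Csa} \ CCSet {A}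
  set Q₁sa : selfAdjoint 𝕆 := ⟨Q₁, by rw [hQ₁def]; exact rOne_self_sa u⟩ with hQ₁sadef
  have hQ₁mem : Q₁sa ∈ CCSet {Csa} := by
    intro Z hZ
    exact (hCkey _ (hZ Csa (Set.mem_singleton Csa))).1.symm
  have hQ₁nmem : Q₁sa ∉ CCSet {A} := by
    intro hmem
    set Yop : 𝕆 := rOne w u + rOne u w with hYopdef
    have hYP : Yop * P = P * Yop := by
      rw [hYopdef, add_mul, mul_add, rOne_mul_sa P hPsa, rOne_mul_sa P hPsa,
        mul_rOne, mul_rOne, hPu, hPw]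
    have hYA : (⟨Yop, sym_sa w u⟩ : selfAdjoint 𝕆) ∈ CSet {A} := by
      intro T hT
      rcases Set.mem_singleton_iff.1 hT with rfl
      exact comm_A_of_comm_P P α β T hA _ hYP
    have heq : Q₁ * Yop = Yop * Q₁ := hmem _ hYA
    -- Q₁ * Yop = Yop * Q₁ : evaluate at u
    have happ := congrArg (fun f : 𝕆 => f u) heq
    simp only [ContinuousLinearMap.mul_apply, ContinuousLinearMap.add_apply, rOne_apply,
      hYopdef, hQ₁def, inner_add_right, inner_smul_right, huu, huw, hwu] at happ
    simp only [one_smul, zero_smul, smul_zero, add_zero, zero_add, mul_one, mul_zero,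
      map_add, map_smul, inner_zero_right] at happ
    exact hw0 happ.symm
  have hss1 : CCSet {A} ⊂ CCSet {Csa} :=
    (Set.ssubset_iff_of_subset hccsub1).2 ⟨Q₁sa, hQ₁mem, hQ₁nmem⟩
    -- mul3 : products of combinations of P, Q₁, Q₂
  have mul3 : ∀ a₁ b₁ d₁ a₂ b₂ d₂ : ℂ,
      (a₁ • P + b₁ • Q₁ + d₁ • Q₂) * (a₂ • P + b₂ • Q₁ + d₂ • Q₂)
      = (a₁ * a₂) • P + (a₁ * b₂ + b₁ * a₂ + b₁ * b₂) • Q₁ + (d₁ * d₂) • Q₂ := by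
    intro a₁ b₁ d₁ a₂ b₂ d₂
    simp only [mul_add, add_mul, smul_mul_assoc, mul_smul_comm, hPP, hPQ₁, hQ₁P, hPQ₂,
      hQ₂P, hQ₁Q₁, hQ₂Q₂, hQ₁Q₂, hQ₂Q₁, smul_smul, smul_zero, add_zero, zero_add]
    module
  obtain ⟨N, hNdef⟩ : ∃ N : 𝕆, N = (α : ℂ) • P + (-c) • Q₁ + (-c) • Q₂ := ⟨_, rfl⟩
  have hDN : ((A - Bsa : selfAdjoint 𝕆) : 𝕆) = N + (β : ℂ) • 1 := by
    show (A : 𝕆) - Bop = N + (β : ℂ) • 1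
    rw [hA, hBopdef, hNdef]
    module
  have hN2 : N * N = ((α:ℂ) * α) • P + ((α:ℂ) * (-c) + (-c) * α + (-c) * (-c)) • Q₁
      + ((-c) * (-c)) • Q₂ := by
    rw [hNdef]; exact mul3 _ _ _ _ _ _
  have hN3 : N * (N * N) = ((α:ℂ) * ((α:ℂ) * α)) • P
      + ((α:ℂ) * ((α:ℂ) * (-c) + (-c) * α + (-c) * (-c)) + (-c) * ((α:ℂ) * α)
          + (-c) * ((α:ℂ) * (-c) + (-c) * α + (-c) * (-c))) • Q₁
      + ((-c) * ((-c) * (-c))) • Q₂ := by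
    rw [hN2]
    nth_rewrite 1 [hNdef]
    exact mul3 _ _ _ _ _ _
  have hQ₁id : ((α:ℂ) ^ 3) • Q₁ = (2 * (α:ℂ) ^ 2) • N + (2 * (α:ℂ)) • (N * N)
      + (-4 : ℂ) • (N * (N * N)) := by
    rw [hN3, hN2, hNdef, hcdef]
    module
  have hPid : ((3 : ℂ) * (α:ℂ) ^ 3) • P = (5 * (α:ℂ) ^ 2) • N + (6 * (α:ℂ)) • (N * N)
      + (-8 : ℂ) • (N * (N * N)) := by
    rw [hN3, hN2, hNdef, hcdef]
    module
  have hQ₂id : ((3 : ℂ) * (α:ℂ) ^ 3) • Q₂ = (-2 * (α:ℂ) ^ 2) • N + (6 * (α:ℂ)) • (N * N)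
      + (-4 : ℂ) • (N * (N * N)) := by
    rw [hN3, hN2, hNdef, hcdef]
    module
  have key : ∀ Z : selfAdjoint 𝕆, Z ∈ CSet {A - Bsa} →
      (Z : 𝕆) * Q₁ = Q₁ * (Z : 𝕆) ∧ (Z : 𝕆) * P = P * (Z : 𝕆) ∧
      (Z : 𝕆) * Q₂ = Q₂ * (Z : 𝕆) := by
    intro Z hZ
    have hZD := hZ (A - Bsa) (Set.mem_singleton _)
    rw [hDN] at hZD
    have hZN : (Z : 𝕆) * N = N * (Z : 𝕆) := by
      have h' : (Z:𝕆) * N + (β:ℂ) • (Z:𝕆) = N * (Z:𝕆) + (β:ℂ) • (Z:𝕆) := by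
        simpa only [mul_add, add_mul, mul_smul_comm, smul_mul_assoc, mul_one, one_mul]
          using hZD
      exact add_right_cancel h'
    have hZN2 : (Z : 𝕆) * (N * N) = (N * N) * (Z : 𝕆) := by
      rw [← mul_assoc, hZN, mul_assoc, hZN, ← mul_assoc]
    have hZN3 : (Z : 𝕆) * (N * (N * N)) = (N * (N * N)) * (Z : 𝕆) := by
      rw [← mul_assoc, hZN, mul_assoc, hZN2, ← mul_assoc]
    have hα3 : ((α:ℂ) ^ 3) ≠ 0 := pow_ne_zero 3 hαC
    have h3α3 : ((3 : ℂ) * (α:ℂ) ^ 3) ≠ 0 := mul_ne_zero three_ne_zero hα3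
    refine ⟨?_, ?_, ?_⟩
    · have h := comm_combo (Z:𝕆) N (N*N) (N*(N*N)) hZN hZN2 hZN3
        (2 * (α:ℂ) ^ 2) (2 * (α:ℂ)) (-4)
      rw [← hQ₁id, mul_smul_comm, smul_mul_assoc] at h
      exact smul_right_injective 𝕆 hα3 h
    · have h := comm_combo (Z:𝕆) N (N*N) (N*(N*N)) hZN hZN2 hZN3
        (5 * (α:ℂ) ^ 2) (6 * (α:ℂ)) (-8)
      rw [← hPid, mul_smul_comm, smul_mul_assoc] at h
      exact smul_right_injective 𝕆 h3α3 h
    · have h := comm_combo (Z:𝕆) N (N*N) (N*(N*N)) hZN hZN2 hZN3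
        (-2 * (α:ℂ) ^ 2) (6 * (α:ℂ)) (-4)
      rw [← hQ₂id, mul_smul_comm, smul_mul_assoc] at h
      exact smul_right_injective 𝕆 h3α3 h
  have hsub2 : CSet {A - Bsa} ⊆ CSet {Csa} := by
    intro Z hZ T hT
    rcases Set.mem_singleton_iff.1 hT with rfl
    show (Z : 𝕆) * (P + Q₁) = (P + Q₁) * (Z : 𝕆)
    rw [mul_add, add_mul, (key Z hZ).1, (key Z hZ).2.1]
  have hccsub2 : CCSet {Csa} ⊆ CCSet {A - Bsa} := fun X hX Z hZ => hX Z (hsub2 hZ)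
  -- strictness 2 : Q₂ ∈ CCSet {A - Bsa} \ CCSet {Csa}
  set Q₂sa : selfAdjoint 𝕆 := ⟨Q₂, by rw [hQ₂def]; exact rOne_self_sa v⟩ with hQ₂sadef
  have hQ₂mem : Q₂sa ∈ CCSet {A - Bsa} := by
    intro Z hZ
    exact (key Z hZ).2.2.symm
  have hQ₂nmem : Q₂sa ∉ CCSet {Csa} := by
    intro hmem
    set Zop : 𝕆 := rOne z v + rOne v z with hZopdef
    have hZC : (⟨Zop, sym_sa z v⟩ : selfAdjoint 𝕆) ∈ CSet {Csa} := by
      intro T hT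
      rcases Set.mem_singleton_iff.1 hT with rfl
      show Zop * (P + Q₁) = (P + Q₁) * Zop
      rw [hZopdef, hQ₁def]
      simp only [add_mul, mul_add, rOne_mul_rOne, rOne_mul_sa P hPsa, mul_rOne,
        hPz, hPv, hzu, hvu, huv, huz, zero_smul, one_smul,
        rOne_zero_left, rOne_zero_right, add_zero, zero_add]
      simp [hzu, hvu, huv, huz]
    have heq : Q₂ * Zop = Zop * Q₂ := hmem _ hZC
    have happ := congrArg (fun f : 𝕆 => f v) heq
    simp only [ContinuousLinearMap.mul_apply, ContinuousLinearMap.add_apply, rOne_apply,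
      hZopdef, hQ₂def, inner_add_right, inner_smul_right, hvv, hvz, hzv,
      map_add, map_smul, inner_zero_right, one_smul, zero_smul, smul_zero, add_zero,
      zero_add, mul_one, mul_zero] at happ
    exact hz0 happ.symm
  have hss2 : CCSet {Csa} ⊂ CCSet {A - Bsa} :=
    (Set.ssubset_iff_of_subset hccsub2).2 ⟨Q₂sa, hQ₂mem, hQ₂nmem⟩
  -- B ≠ A at the commutant level
  have hne : CSet {Bsa} ≠ CSet {A} := by
    intro heq
    set Xop : 𝕆 := rOne v u + rOne u v with hXopdef
    have hXB : (⟨Xop, sym_sa v u⟩ : selfAdjoint 𝕆) ∈ CSet {Bsa} := by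
      intro T hT
      rcases Set.mem_singleton_iff.1 hT with rfl
      show Xop * Bop = Bop * Xop
      rw [hBopdef, mul_smul_comm, smul_mul_assoc]
      congr 1
      rw [hXopdef, hQ₁def, hQ₂def]
      simp only [add_mul, mul_add, rOne_mul_rOne, huu, hvv, huv, hvu,
        zero_smul, one_smul, add_zero, zero_add]
      abel
    rw [heq] at hXB
    have hXA := hXB A (Set.mem_singleton A)
    have hXP : Xop * P = P * Xop := comm_P_of_comm_A P α β hα A hA _ hXA
    have happ := congrArg (fun f : 𝕆 => f u) hXP
    simp only [ContinuousLinearMap.mul_apply, ContinuousLinearMap.add_apply, rOne_apply,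
      hXopdef, hPu, map_add, map_smul, hPv, inner_smul_right, huu, hvu,
      one_smul, zero_smul, smul_zero, add_zero, zero_add] at happ
    exact hv0 happ
  exact ⟨Bsa, hBmem, ⟨c, 0, hc0, hspec⟩, Csa, hne, hss1, hss2⟩


theorem stmt10
    (hdim : 4 ≤ Module.rank ℂ H)
    (P : H →L[ℂ] H) (hPsa : IsSelfAdjoint P) (hPidem : IsIdempotentElem P)
    (hP0 : P ≠ 0) (hP1 : P ≠ 1)
    (α β : ℝ) (hα : α ≠ 0)
    (A : selfAdjoint (H →L[ℂ] H))
    (hA : (A : H →L[ℂ] H) = (α : ℂ) • P + (β : ℂ) • 1) :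
    ((1 < Module.rank ℂ (LinearMap.range (P : H →ₗ[ℂ] H)) ∧
      1 < Module.rank ℂ (LinearMap.range ((1 - P : H →L[ℂ] H) : H →ₗ[ℂ] H))) ↔
     (∃ B ∈ CSet {A},
        (∃ a b : ℂ, a ≠ b ∧ spectrum ℂ (B : H →L[ℂ] H) = {a, b}) ∧
        ∃ C : selfAdjoint (H →L[ℂ] H),
          CSet {B} ≠ CSet {A} ∧
          CCSet {A} ⊂ CCSet {C} ∧ CCSet {C} ⊂ CCSet {A - B})) := by
  constructor
  · rintro ⟨h1, h2⟩
    exact forward_dir P hPsa hPidem α β hα A hA h1 h2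
  · rintro ⟨B, hB, ⟨a, b, hab, hsp⟩, C, hne, hss1, hss2⟩
    by_contra hcon
    rw [not_and_or, not_lt, not_lt] at hcon
    exact (reverse_dir P hPsa hPidem hP0 hP1 α β hα A hA hcon B hB a b hab hsp C hss1 hss2).elim
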